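/- The identity Σ_{n≥0} ((xq;q²)_n/(t;q²)_{n+1}) (tq)^n = Σ_{n≥0} (xq;q)_n t^n q^{n(n+1)/2} / (t;q)_{n+1} holds as formal power series in q, t, x. -/

import Mathlib

open Finset

/-- The product (coefficient-wise convergence) topology on formal power series. -/
noncomputable instance : TopologicalSpace (MvPowerSeries (Fin 3) ℚ) :=
  inferInstanceAs (TopologicalSpace ((Fin 3 →₀ ℕ) → ℚ))

/-- The variable `q`. -/
noncomputable def q : MvPowerSeries (Fin 3) ℚ := MvPowerSeries.X 0

/-- The variable `t`. -/
noncomputable def t : MvPowerSeries (Fin 3) ℚ := MvPowerSeries.X 1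

/-- The variable `x`. -/
noncomputable def x : MvPowerSeries (Fin 3) ℚ := MvPowerSeries.X 2

/-- The finite q-Pochhammer symbol `(a; b)_n = ∏_{k=0}^{n-1} (1 - a b^k)`. -/
noncomputable def poch (a b : MvPowerSeries (Fin 3) ℚ) (n : ℕ) : MvPowerSeries (Fin 3) ℚ :=
  ∏ k ∈ range n, (1 - a * b ^ k)

/-! Expanding `1 / (t; b)_{n+1} = ∑_m [m + n, n]_b t^m`, the coefficients of `t^N` of the two
sides become `∑_n [N, n]_{q²} (xq; q²)_n q^n` and `∑_n [N, n]_q (xq; q)_n q^{n(n+1)/2}`.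
Expanding the Pochhammer symbols by the q-binomial theorem and using
`[N, n] [n, j] = [N, j] [N - j, n - j]`, the coefficients of `(-xq)^j` in these sums are
`q^{j²} [N, j]_{q²} (-q; q)_{N-j}` (by Gauss's identity `∑_m [M, m]_{q²} q^m = (-q; q)_M`) and
`q^{j²} [N, j]_q (-q^{j+1}; q)_{N-j}` (by the q-binomial theorem again). They agree because
`(q²; q²)_m = (q; q)_m (-q; q)_m`. -/

local notation "R" => MvPowerSeries (Fin 3) ℚ

open MvPowerSeries

theorem Nat.add_choose_two (m n : ℕ) : (m + n).choose 2 = m.choose 2 + n.choose 2 + m * n := by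
  induction n with
  | zero => simp
  | succ n ih =>
    rw [← add_assoc, Nat.choose_succ_succ', ih, Nat.choose_succ_succ' n, Nat.choose_one_right,
      Nat.choose_one_right]
    ring

theorem sum_range_succ_comp_succ {M : Type*} [AddCommGroup M] (g : ℕ → M) {n : ℕ}
    (hg : g (n + 1) = 0) :
    ∑ j ∈ range (n + 1), g (j + 1) = ∑ j ∈ range (n + 1), g j - g 0 := by
  rw [eq_sub_iff_add_eq, ← sum_range_succ', sum_range_succ, hg, add_zero]

theorem Summable.tsum_prod_eq_tsum_sum_antidiagonal {α A : Type*} [AddCommMonoid α]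
    [TopologicalSpace α] [ContinuousAdd α] [T3Space α] [AddCommMonoid A] [HasAntidiagonal A]
    {f : A × A → α} (hf : Summable f) :
    ∑' p, f p = ∑' N, ∑ p ∈ antidiagonal N, f p := by
  set e := HasAntidiagonal.sigmaAntidiagonalEquivProd (A := A)
  calc ∑' p, f p = ∑' c, f (e c) := (e.tsum_eq f).symm
    _ = ∑' N, ∑' c : antidiagonal N, f (e ⟨N, c⟩) :=
      (e.summable_iff.2 hf).tsum_sigma' fun N => (hasSum_fintype _).summable
    _ = ∑' N, ∑ p ∈ antidiagonal N, f p := tsum_congr fun N => Finset.tsum_subtype _ f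

section QChoose

variable {S : Type*} [Semiring S]

/-- The Gaussian binomial coefficient `[N, k]_b`. -/
def qChoose (b : S) : ℕ → ℕ → S
  | _, 0 => 1
  | 0, _ + 1 => 0
  | N + 1, k + 1 => qChoose b N k + b ^ (k + 1) * qChoose b N (k + 1)

@[simp] theorem qChoose_zero_right (b : S) (N : ℕ) : qChoose b N 0 = 1 := by cases N <;> rfl

theorem qChoose_succ_succ (b : S) (N k : ℕ) :
    qChoose b (N + 1) (k + 1) = qChoose b N k + b ^ (k + 1) * qChoose b N (k + 1) := rfl

theorem qChoose_eq_zero_of_lt (b : S) {N k : ℕ} (h : N < k) : qChoose b N k = 0 := by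
  induction N generalizing k with
  | zero => obtain ⟨k, rfl⟩ := Nat.exists_eq_add_one_of_ne_zero h.ne'; rfl
  | succ N ih =>
    obtain ⟨k, rfl⟩ := Nat.exists_eq_add_one_of_ne_zero (Nat.ne_zero_of_lt h)
    rw [qChoose_succ_succ, ih (by omega), ih (by omega), mul_zero, add_zero]

@[simp] theorem qChoose_self (b : S) (N : ℕ) : qChoose b N N = 1 := by
  induction N with
  | zero => rfl
  | succ N ih =>
    rw [qChoose_succ_succ, ih, qChoose_eq_zero_of_lt b N.lt_succ_self, mul_zero, add_zero]

end QChoose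

section Pochhammer

theorem poch_add (a b : R) (m n : ℕ) :
    poch a b (m + n) = poch a b m * poch (a * b ^ m) b n := by
  simp only [poch, prod_range_add, mul_assoc, ← pow_add]

theorem poch_succ (a b : R) (n : ℕ) : poch a b (n + 1) = poch a b n * (1 - a * b ^ n) :=
  prod_range_succ _ n

theorem poch_succ' (a b : R) (n : ℕ) : poch a b (n + 1) = (1 - a) * poch (a * b) b n := by
  rw [add_comm, poch_add, pow_one]
  simp [poch]

theorem poch_sq (b : R) (n : ℕ) : poch (b ^ 2) (b ^ 2) n = poch b b n * poch (-b) b n := by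
  simp only [poch, ← prod_mul_distrib]
  refine prod_congr rfl fun k _ => ?_
  ring

theorem isUnit_poch {a : R} (b : R) (ha : constantCoeff a = 0) (n : ℕ) :
    IsUnit (poch a b n) := by
  simp [isUnit_iff_constantCoeff, poch, ha]

end Pochhammer

section GaussianBinomial

theorem qChoose_add_mul_poch_mul_poch (b : R) (k l : ℕ) :
    qChoose b (k + l) k * poch b b k * poch b b l = poch b b (k + l) := by
  induction k generalizing l with
  | zero => simp [poch]
  | succ k ihk =>
    induction l with
    | zero => simp [poch]
    | succ l ihl =>
      have hk := ihk (l + 1)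
      rw [show k + (l + 1) = k + 1 + l by omega, poch_succ _ _ l] at hk
      rw [poch_succ _ _ k] at ihl
      rw [show k + 1 + (l + 1) = k + 1 + l + 1 by omega, qChoose_succ_succ, poch_succ _ _ k,
        poch_succ _ _ l, poch_succ _ _ (k + 1 + l)]
      linear_combination (1 - b * b ^ k) * hk + b ^ (k + 1) * (1 - b * b ^ l) * ihl

theorem poch_eq_sum_qChoose (a b : R) (n : ℕ) :
    poch a b n = ∑ j ∈ range (n + 1), qChoose b n j * (-a) ^ j * b ^ j.choose 2 := by
  induction n generalizing a with
  | zero => simp [poch]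
  | succ n ih =>
    let g (j : ℕ) : R := qChoose b n j * (-(a * b)) ^ j * b ^ j.choose 2
    have hpascal : ∀ j ∈ range (n + 1), qChoose b (n + 1) (j + 1) * (-a) ^ (j + 1)
        * b ^ (j + 1).choose 2 = -a * g j + g (j + 1) := by
      intro j _
      simp only [g]
      rw [qChoose_succ_succ, Nat.add_choose_two j 1, Nat.choose_eq_zero_of_lt one_lt_two]
      ring
    have hg : g (n + 1) = 0 := by simp only [g, qChoose_eq_zero_of_lt b n.lt_succ_self, zero_mul]
    rw [poch_succ', ih (a * b), sum_range_succ' _ (n + 1), sum_congr rfl hpascal, sum_add_distrib,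
      ← mul_sum, sum_range_succ_comp_succ g hg]
    simp only [g, qChoose_zero_right, pow_zero, Nat.choose_zero_succ, mul_one]
    ring

variable {b : R}

theorem qChoose_add_symm (hb : constantCoeff b = 0) (k l : ℕ) :
    qChoose b (k + l) k = qChoose b (k + l) l := by
  refine ((isUnit_poch b hb k).mul (isUnit_poch b hb l)).mul_right_cancel ?_
  have hkl := qChoose_add_mul_poch_mul_poch b k l
  have hlk := qChoose_add_mul_poch_mul_poch b l k
  rw [add_comm l k] at hlk
  linear_combination hkl - hlk

theorem qChoose_add_add_mul_qChoose (hb : constantCoeff b = 0) (j m r : ℕ) :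
    qChoose b (j + m + r) (j + m) * qChoose b (j + m) j
      = qChoose b (j + m + r) j * qChoose b (m + r) m := by
  refine (((isUnit_poch b hb j).mul (isUnit_poch b hb m)).mul
    (isUnit_poch b hb r)).mul_right_cancel ?_
  have h1 := qChoose_add_mul_poch_mul_poch b j m
  have h2 := qChoose_add_mul_poch_mul_poch b (j + m) r
  have h3 := qChoose_add_mul_poch_mul_poch b m r
  have h4 := qChoose_add_mul_poch_mul_poch b j (m + r)
  rw [← add_assoc] at h4
  linear_combination qChoose b (j + m + r) (j + m) * poch b b r * h1 + h2
    - qChoose b (j + m + r) j * poch b b j * h3 - h4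

theorem sum_qChoose_mul_qChoose (hb : constantCoeff b = 0) (w : ℕ → R) {j N : ℕ}
    (hj : j ≤ N) :
    ∑ n ∈ range (N + 1), qChoose b N n * qChoose b n j * w n
      = qChoose b N j * ∑ m ∈ range (N - j + 1), qChoose b (N - j) m * w (j + m) := by
  obtain ⟨M, rfl⟩ := Nat.exists_eq_add_of_le hj
  rw [add_tsub_cancel_left, add_assoc, sum_range_add, mul_sum,
    sum_eq_zero fun n hn => by rw [qChoose_eq_zero_of_lt b (mem_range.1 hn), mul_zero, zero_mul],
    zero_add]
  refine sum_congr rfl fun m hm => ?_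
  obtain ⟨r, rfl⟩ := Nat.exists_eq_add_of_le (Nat.lt_succ_iff.1 (mem_range.1 hm))
  rw [← add_assoc, qChoose_add_add_mul_qChoose hb]
  ring

theorem sum_qChoose_mul_pow_reflect (hb : constantCoeff b = 0) (c : R) (M : ℕ) :
    ∑ m ∈ range (M + 1), qChoose b M m * c ^ m
      = ∑ m ∈ range (M + 1), qChoose b M m * c ^ (M - m) := by
  rw [← sum_range_reflect]
  refine sum_congr rfl fun m hm => ?_
  obtain ⟨l, rfl⟩ := Nat.exists_eq_add_of_le (Nat.lt_succ_iff.1 (mem_range.1 hm))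
  rw [add_tsub_cancel_right, show m + l - m = l by omega, add_comm m l, qChoose_add_symm hb]

theorem sum_qChoose_sq_mul_pow (hb : constantCoeff b = 0) (M : ℕ) :
    ∑ m ∈ range (M + 1), qChoose (b ^ 2) M m * b ^ m = poch (-b) b M := by
  have hb2 : constantCoeff (b ^ 2) = 0 := by simp [hb]
  induction M with
  | zero => simp [poch]
  | succ M ih =>
    -- The Pascal recursion closes on the reflected sum `∑ [M, m] b^(M - m)`, which is the
    -- original one by the symmetry `[M, m] = [M, M - m]`.
    have hpascal : ∀ j ∈ range (M + 1), qChoose (b ^ 2) (M + 1) (j + 1) * b ^ (M + 1 - (j + 1))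
        = qChoose (b ^ 2) M j * b ^ (M - j)
          + b ^ (M + 1) * (qChoose (b ^ 2) M (j + 1) * b ^ (j + 1)) := by
      intro j hj
      obtain ⟨l, rfl⟩ := Nat.exists_eq_add_of_le (Nat.lt_succ_iff.1 (mem_range.1 hj))
      rw [qChoose_succ_succ, show j + l + 1 - (j + 1) = l by omega, show j + l - j = l by omega]
      ring
    rw [sum_qChoose_mul_pow_reflect hb2, sum_range_succ', sum_congr rfl hpascal, sum_add_distrib,
      ← mul_sum, ← sum_qChoose_mul_pow_reflect hb2,
      sum_range_succ_comp_succ (fun j => qChoose (b ^ 2) M j * b ^ j)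
        (by rw [qChoose_eq_zero_of_lt _ M.lt_succ_self, zero_mul]), ih, poch_succ]
    simp only [qChoose_zero_right, tsub_zero, one_mul]
    ring

theorem qChoose_sq_mul_poch_neg (hb : constantCoeff b = 0) (j l : ℕ) :
    qChoose (b ^ 2) (j + l) j * poch (-b) b l
      = qChoose b (j + l) j * poch (-b ^ (j + 1)) b l := by
  refine (((isUnit_poch b hb j).mul (isUnit_poch b hb l)).mul
    (isUnit_poch (a := -b) b (by simp [hb]) j)).mul_right_cancel ?_
  have hsq := qChoose_add_mul_poch_mul_poch (b ^ 2) j l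
  rw [poch_sq, poch_sq, poch_sq] at hsq
  have h := qChoose_add_mul_poch_mul_poch b j l
  have hsplit := poch_add (-b) b j l
  rw [show -b * b ^ j = -b ^ (j + 1) by ring] at hsplit
  linear_combination
    hsq - poch (-b ^ (j + 1)) b l * poch (-b) b j * h + poch b b (j + l) * hsplit

theorem sum_poch_mul_qChoose (a : R) (hb : constantCoeff b = 0) (w : ℕ → R) (N : ℕ) :
    ∑ n ∈ range (N + 1), poch a b n * w n * qChoose b N n
      = ∑ j ∈ range (N + 1), (-a) ^ j * b ^ j.choose 2 * qChoose b N j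
          * ∑ m ∈ range (N - j + 1), qChoose b (N - j) m * w (j + m) := by
  have hexpand : ∀ n ∈ range (N + 1), poch a b n * w n * qChoose b N n
      = ∑ j ∈ range (N + 1),
          (-a) ^ j * b ^ j.choose 2 * (qChoose b N n * qChoose b n j * w n) := by
    intro n hn
    rw [poch_eq_sum_qChoose, sum_mul, sum_mul]
    refine sum_subset (range_subset_range.2 (by simpa using hn)) (fun j _ hj => ?_) |>.trans
      (sum_congr rfl fun j _ => by ring)
    rw [qChoose_eq_zero_of_lt b (by simpa using hj)]
    ring
  rw [sum_congr rfl hexpand, sum_comm]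
  refine sum_congr rfl fun j hj => ?_
  rw [← mul_sum, sum_qChoose_mul_qChoose hb w (Nat.lt_succ_iff.1 (mem_range.1 hj))]
  ring

theorem sum_poch_mul_qChoose_sq (a : R) (hb : constantCoeff b = 0) (N : ℕ) :
    ∑ n ∈ range (N + 1), poch a (b ^ 2) n * b ^ n * qChoose (b ^ 2) N n
      = ∑ n ∈ range (N + 1), poch a b n * b ^ (n + 1).choose 2 * qChoose b N n := by
  rw [sum_poch_mul_qChoose a (by simp [hb]) (b ^ ·), sum_poch_mul_qChoose a hb]
  refine sum_congr rfl fun j hj => ?_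
  obtain ⟨l, rfl⟩ := Nat.exists_eq_add_of_le (Nat.lt_succ_iff.1 (mem_range.1 hj))
  have hgauss :
      ∑ m ∈ range (l + 1), qChoose (b ^ 2) l m * b ^ (j + m) = b ^ j * poch (-b) b l := by
    simp only [pow_add, mul_left_comm _ (b ^ j), ← mul_sum, sum_qChoose_sq_mul_pow hb]
  have hbinom : ∑ m ∈ range (l + 1), qChoose b l m * b ^ (j + m + 1).choose 2
      = b ^ (j + 1).choose 2 * poch (-b ^ (j + 1)) b l := by
    rw [poch_eq_sum_qChoose, mul_sum]
    refine sum_congr rfl fun m _ => ?_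
    rw [add_right_comm, Nat.add_choose_two]
    ring
  rw [add_tsub_cancel_left, hgauss, hbinom, Nat.add_choose_two j 1,
    Nat.choose_eq_zero_of_lt one_lt_two]
  linear_combination (-a) ^ j * (b ^ 2) ^ j.choose 2 * b ^ j * qChoose_sq_mul_poch_neg hb j l

end GaussianBinomial

section TSeries

noncomputable instance : T3Space R := inferInstanceAs (T3Space ((Fin 3 →₀ ℕ) → ℚ))

noncomputable instance : IsTopologicalRing R := WithPiTopology.instIsTopologicalRing (Fin 3) ℚ

theorem coeff_mul_t_pow_of_lt (g : R) {k : ℕ} {d : Fin 3 →₀ ℕ} (h : d 1 < k) :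
    coeff d (g * t ^ k) = 0 := by
  rw [t, X_pow_eq, coeff_mul_monomial, if_neg (by simpa [Finsupp.single_le_iff] using h)]

theorem summable_mul_t_pow {ι : Type*} (g : ι → R) (deg : ι → ℕ)
    (hdeg : ∀ N, {i | deg i ≤ N}.Finite) : Summable fun i => g i * t ^ deg i := by
  refine WithPiTopology.summable_iff_summable_coeff.2 fun d =>
    summable_of_hasFiniteSupport <| (hdeg (d 1)).subset fun i hi => ?_
  by_contra h
  exact hi (coeff_mul_t_pow_of_lt _ (not_le.1 h))

theorem summable_mul_t_pow_nat (c : ℕ → R) : Summable fun m => c m * t ^ m :=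
  summable_mul_t_pow c id Set.finite_Iic

theorem tsum_mul_t_pow_eq_add (c : ℕ → R) :
    ∑' m, c m * t ^ m = c 0 + t * ∑' m, c (m + 1) * t ^ m := by
  rw [(summable_mul_t_pow_nat c).tsum_eq_zero_add, ← (summable_mul_t_pow_nat _).tsum_mul_left]
  simp only [pow_zero, mul_one, pow_succ]
  congr 1
  exact tsum_congr fun m => by ring

theorem poch_t_mul_tsum_qChoose (b : R) (n : ℕ) :
    poch t b (n + 1) * ∑' m, qChoose b (m + n) n * t ^ m = 1 := by
  induction n with
  | zero =>
    have h := tsum_mul_t_pow_eq_add fun _ => 1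
    simp only [add_zero, qChoose_zero_right, one_mul, zero_add] at h ⊢
    rw [poch_succ]
    simp only [poch, range_zero, prod_empty, pow_zero, mul_one, one_mul]
    linear_combination h
  | succ n ih =>
    have hpascal : ∀ m, qChoose b (m + 1 + (n + 1)) (n + 1) * t ^ m
        = qChoose b (m + 1 + n) n * t ^ m
          + b ^ (n + 1) * (qChoose b (m + (n + 1)) (n + 1) * t ^ m) := by
      intro m
      rw [show m + 1 + (n + 1) = m + 1 + n + 1 by omega, qChoose_succ_succ,
        show m + 1 + n = m + (n + 1) by omega]
      ring
    have hsucc := tsum_mul_t_pow_eq_add fun m => qChoose b (m + (n + 1)) (n + 1)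
    have hn := tsum_mul_t_pow_eq_add fun m => qChoose b (m + n) n
    simp only [hpascal] at hsucc
    rw [(summable_mul_t_pow_nat _).tsum_add ((summable_mul_t_pow_nat _).mul_left _),
      (summable_mul_t_pow_nat _).tsum_mul_left] at hsucc
    simp only [zero_add, qChoose_self] at hsucc hn
    have hstep : (1 - t * b ^ (n + 1)) * ∑' m, qChoose b (m + (n + 1)) (n + 1) * t ^ m
        = ∑' m, qChoose b (m + n) n * t ^ m := by
      linear_combination hsucc - hn
    rw [poch_succ, mul_assoc, hstep, ih]

theorem inv_poch_t (b : R) (n : ℕ) :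
    (poch t b (n + 1))⁻¹ = ∑' m, qChoose b (m + n) n * t ^ m := by
  rw [MvPowerSeries.inv_eq_iff_mul_eq_one, mul_comm, poch_t_mul_tsum_qChoose]
  exact (isUnit_poch b (constantCoeff_X 1) _).map constantCoeff |>.ne_zero

theorem tsum_mul_t_pow_mul_inv_poch (A : ℕ → R) (b : R) :
    ∑' n, A n * t ^ n * (poch t b (n + 1))⁻¹
      = ∑' N, (∑ n ∈ range (N + 1), A n * qChoose b N n) * t ^ N := by
  have hF : Summable fun p : ℕ × ℕ => A p.1 * qChoose b (p.2 + p.1) p.1 * t ^ (p.1 + p.2) := by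
    refine summable_mul_t_pow (fun p : ℕ × ℕ => A p.1 * qChoose b (p.2 + p.1) p.1)
      (fun p => p.1 + p.2) fun N =>
      ((Set.finite_Iic N).prod (Set.finite_Iic N)).subset fun p hp => ?_
    have hp : p.1 + p.2 ≤ N := hp
    exact ⟨Set.mem_Iic.2 (by omega), Set.mem_Iic.2 (by omega)⟩
  calc ∑' n, A n * t ^ n * (poch t b (n + 1))⁻¹
      = ∑' n, ∑' m, A n * qChoose b (m + n) n * t ^ (n + m) := tsum_congr fun n => by
        rw [inv_poch_t, ← (summable_mul_t_pow_nat _).tsum_mul_left]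
        exact tsum_congr fun m => by ring
    _ = ∑' p : ℕ × ℕ, A p.1 * qChoose b (p.2 + p.1) p.1 * t ^ (p.1 + p.2) :=
        (hF.tsum_prod' fun n => summable_mul_t_pow (fun m => A n * qChoose b (m + n) n) (n + ·)
          fun N => (Set.finite_Iic N).subset fun m (hm : n + m ≤ N) =>
            Set.mem_Iic.2 (by omega)).symm
    _ = ∑' N, ∑ p ∈ antidiagonal N, A p.1 * qChoose b (p.2 + p.1) p.1 * t ^ (p.1 + p.2) :=
        hF.tsum_prod_eq_tsum_sum_antidiagonal
    _ = _ := tsum_congr fun N => by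
        rw [Nat.sum_antidiagonal_eq_sum_range_succ_mk, sum_mul]
        refine sum_congr rfl fun n hn => ?_
        have hn : n ≤ N := Nat.lt_succ_iff.1 (mem_range.1 hn)
        rw [Nat.sub_add_cancel hn, Nat.add_sub_cancel' hn]

end TSeries

/-- Lemma 3, a transformation of Andrews. -/
theorem andrews_transformation :
    ∑' n : ℕ, poch (x * q) (q ^ 2) n * (poch t (q ^ 2) (n + 1))⁻¹ * (t * q) ^ n
      = ∑' n : ℕ, poch (x * q) q n * t ^ n * q ^ (n * (n + 1) / 2)
          * (poch t q (n + 1))⁻¹ := by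
  have hq : constantCoeff q = 0 := constantCoeff_X 0
  have hlhs (n : ℕ) : poch (x * q) (q ^ 2) n * (poch t (q ^ 2) (n + 1))⁻¹ * (t * q) ^ n
      = poch (x * q) (q ^ 2) n * q ^ n * t ^ n * (poch t (q ^ 2) (n + 1))⁻¹ := by ring
  have hrhs (n : ℕ) : poch (x * q) q n * t ^ n * q ^ (n * (n + 1) / 2) * (poch t q (n + 1))⁻¹
      = poch (x * q) q n * q ^ (n + 1).choose 2 * t ^ n * (poch t q (n + 1))⁻¹ := by
    rw [Nat.choose_two_right, Nat.add_sub_cancel, mul_comm n]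
    ring
  simp only [hlhs, hrhs, tsum_mul_t_pow_mul_inv_poch, sum_poch_mul_qChoose_sq (x * q) hq]
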